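/- arXiv:2507.14620 — 2 statements merged into one kernel-verified Lean document; each statement's English description precedes it below -/
import Mathlib

section
/- Let G be a finite simple graph, S ⊆ V(G) with |S| = s, and let 1 ≤ ℓ ≤ s. Define α_{s,ℓ}(k,i) for 1 ≤ k ≤ s, 1 ≤ i ≤ ℓ by α_{s,ℓ}(k,i) := C(s−i, k−i) − Σ_{j=i+1}^{ℓ} α_{s,ℓ}(k,j) · C(s−i, j−i). If for all k with 1 ≤ k ≤ s, Σ_{W ⊆ S, |W| = k} |Obs(G;W)| = Σ_{i=1}^{ℓ} α_{s,ℓ}(k,i) · Σ_{W ⊆ S, |W| = i} |Obs(G;W)|, then the polynomial E(G;S,q) has degree at most ℓ. -/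
open Polynomial

/-- The closed neighborhood `N[S]` of a set of vertices. -/
def closedNbhd {V : Type*} (G : SimpleGraph V) (S : Set V) : Set V :=
  ⋃ v ∈ S, insert v (G.neighborSet v)

/-- A set `B` is closed under the zero forcing step: whenever `x ∈ B` has exactly one
neighbor `y` outside `B`, then `y` is already in `B`. -/
def PDClosed {V : Type*} (G : SimpleGraph V) (B : Set V) : Prop :=
  ∀ x ∈ B, ∀ y : V, G.neighborSet x \ B = {y} → y ∈ B

/-- `Obs G S` is the set of observed vertices of the power domination process started with
PMU placement `S`: the least superset of `N[S]` closed under the zero forcing step. -/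
def Obs {V : Type*} (G : SimpleGraph V) (S : Set V) : Set V :=
  ⋂₀ {B : Set V | closedNbhd G S ⊆ B ∧ PDClosed G B}

/-- The expected value polynomial
`E(G;S,q) = Σ_{W ⊆ S} |Obs(G;W)| q^{|S∖W|} (1−q)^{|W|}`. -/
noncomputable def expol {V : Type*} (G : SimpleGraph V) (S : Finset V) : Polynomial ℝ :=
  ∑ W ∈ S.powerset,
    ((Obs G ↑W).ncard : Polynomial ℝ) * X ^ (S.card - W.card) * (1 - X) ^ W.card

/-- The binomial coefficient `C(s−i, k−i)`, interpreted as `0` when `k < i`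
(i.e. when the lower index `k − i` would be negative). -/
def binShift (s k i : ℕ) : ℤ :=
  if i ≤ k then ((s - i).choose (k - i) : ℤ) else 0

/-- `alphaCoef s ℓ k i = α_{s,ℓ}(k,i)`, defined by downward recursion on `i`:
`α_{s,ℓ}(k,i) = C(s−i, k−i) − Σ_{j=i+1}^{ℓ} α_{s,ℓ}(k,j) · C(s−i, j−i)`. -/
def alphaCoef (s ℓ k i : ℕ) : ℤ :=
  binShift s k i -
    ∑ j ∈ (Finset.Ioc i ℓ).attach,
      alphaCoef s ℓ k j.1 * (((s - i).choose (j.1 - i) : ℕ) : ℤ)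
termination_by ℓ - i
decreasing_by
  have h := Finset.mem_Ioc.mp j.2
  omega

/-!
Write `E(G;S,q) = Σ_k T_k q^(s-k) (1-q)^k` with `T_k = Σ_{|W| = k} |Obs(G;W)|`, where `T_0 = 0`.
Substituting the hypothesis gives `E = Σ_{1 ≤ i ≤ ℓ} T_i P_i` with
`P_i = Σ_k α(k,i) q^(s-k) (1-q)^k` (`alphaPoly`).
Since `Σ_k C(s-i, k-i) q^(s-k) (1-q)^k = (1-q)^i (q + (1-q))^(s-i) = (1-q)^i` for `i ≤ s`
(and `0` for `i > s`), the recursion defining `α` turns into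
`P_i = (a polynomial of degree ≤ i) - Σ_{j=i+1}^{ℓ} C(s-i, j-i) P_j`, and downward induction on `i`
gives `deg P_i ≤ ℓ`.
-/

open Finset

lemma alphaCoef_eq (s ℓ k i : ℕ) :
    alphaCoef s ℓ k i =
      binShift s k i - ∑ j ∈ Ioc i ℓ, alphaCoef s ℓ k j * ((s - i).choose (j - i) : ℤ) := by
  rw [alphaCoef, ← sum_attach (Ioc i ℓ)]

lemma alphaCoef_zero_left (s ℓ : ℕ) {i : ℕ} (hi : 1 ≤ i) : alphaCoef s ℓ 0 i = 0 := by
  rw [alphaCoef_eq, binShift, if_neg (by omega), zero_sub, neg_eq_zero]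
  refine sum_eq_zero fun j hj => ?_
  have : i < j := (mem_Ioc.mp hj).1
  rw [alphaCoef_zero_left s ℓ (i := j) (by omega), zero_mul]
termination_by ℓ - i
decreasing_by have := mem_Ioc.mp hj; omega

section ExpectedValueBasis

variable {R : Type*} [CommRing R]

lemma sum_binShift_mul_eq {s i : ℕ} (hi : i ≤ s) :
    ∑ k ∈ range (s + 1), (binShift s k i : R[X]) * (X ^ (s - k) * (1 - X) ^ k) =
      (1 - X) ^ i := by
  rw [show s + 1 = i + (s - i + 1) by omega, sum_range_add]
  have below : ∀ k ∈ range i, (binShift s k i : R[X]) * (X ^ (s - k) * (1 - X) ^ k) = 0 := by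
    intro k hk
    rw [binShift, if_neg (by simp at hk; omega), Int.cast_zero, zero_mul]
  rw [sum_eq_zero below, zero_add]
  calc ∑ m ∈ range (s - i + 1),
        (binShift s (i + m) i : R[X]) * (X ^ (s - (i + m)) * (1 - X) ^ (i + m))
      = (1 - X) ^ i * ∑ m ∈ range (s - i + 1),
          (1 - X) ^ m * X ^ (s - i - m) * ((s - i).choose m : R[X]) := by
        rw [mul_sum]
        refine sum_congr rfl fun m _ => ?_
        rw [binShift, if_pos (by omega), Nat.add_sub_cancel_left, Nat.sub_add_eq, pow_add]
        push_cast
        ring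
    _ = (1 - X) ^ i := by rw [← add_pow, sub_add_cancel, one_pow, mul_one]

lemma degree_one_sub_X_pow_le (n : ℕ) : ((1 - X : R[X]) ^ n).degree ≤ (n : WithBot ℕ) := by
  have h : (1 - X : R[X]).degree ≤ 1 :=
    (degree_sub_le _ _).trans (max_le (degree_one_le.trans zero_le_one) degree_X_le)
  simpa using degree_pow_le_of_le n h

lemma degree_intCast_mul_le (n : ℤ) (p : R[X]) : ((n : R[X]) * p).degree ≤ p.degree :=
  (degree_mul_le _ _).trans <| by
    simpa using add_le_add_left (degree_intCast_le (R := R) n) p.degree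

lemma degree_sum_binShift_mul_le (s i : ℕ) :
    (∑ k ∈ range (s + 1), (binShift s k i : R[X]) * (X ^ (s - k) * (1 - X) ^ k)).degree ≤
      (i : WithBot ℕ) := by
  rcases le_or_gt i s with hi | hi
  · rw [sum_binShift_mul_eq hi]
    exact degree_one_sub_X_pow_le i
  · rw [sum_eq_zero fun k hk => by
      rw [binShift, if_neg (by simp at hk; omega), Int.cast_zero, zero_mul]]
    simp

variable (R) in
noncomputable def alphaPoly (s ℓ i : ℕ) : R[X] :=
  ∑ k ∈ range (s + 1), (alphaCoef s ℓ k i : R[X]) * (X ^ (s - k) * (1 - X) ^ k)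

lemma alphaPoly_eq (s ℓ i : ℕ) :
    alphaPoly R s ℓ i =
      ∑ k ∈ range (s + 1), (binShift s k i : R[X]) * (X ^ (s - k) * (1 - X) ^ k)
        - ∑ j ∈ Ioc i ℓ, ((s - i).choose (j - i) : R[X]) * alphaPoly R s ℓ j := by
  simp only [alphaPoly, alphaCoef_eq s ℓ _ i, Int.cast_sub, Int.cast_sum, Int.cast_mul,
    Int.cast_natCast, sub_mul, sum_sub_distrib, sum_mul]
  rw [sum_comm]
  simp only [mul_sum]
  congr 1
  refine sum_congr rfl fun j _ => sum_congr rfl fun k _ => ?_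
  ring

lemma degree_alphaPoly_le (s ℓ : ℕ) {i : ℕ} (hi : i ≤ ℓ) :
    (alphaPoly R s ℓ i).degree ≤ (ℓ : WithBot ℕ) := by
  rw [alphaPoly_eq]
  refine (degree_sub_le _ _).trans (max_le ?_ ?_)
  · exact (degree_sum_binShift_mul_le s i).trans (by exact_mod_cast hi)
  · refine (degree_sum_le _ _).trans (Finset.sup_le fun j hj => ?_)
    rw [← Int.cast_natCast]
    exact (degree_intCast_mul_le _ _).trans (degree_alphaPoly_le s ℓ (mem_Ioc.mp hj).2)
termination_by ℓ - i
decreasing_by have := mem_Ioc.mp hj; omega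

lemma degree_sum_mul_le_of_eq_sum_alphaCoef {s ℓ : ℕ} (T : ℕ → ℤ)
    (hT : ∀ k ≤ s, T k = ∑ i ∈ Icc 1 ℓ, alphaCoef s ℓ k i * T i) :
    (∑ k ∈ range (s + 1), (T k : R[X]) * (X ^ (s - k) * (1 - X) ^ k)).degree
      ≤ (ℓ : WithBot ℕ) := by
  have hsum : ∑ k ∈ range (s + 1), (T k : R[X]) * (X ^ (s - k) * (1 - X) ^ k)
      = ∑ i ∈ Icc 1 ℓ, (T i : R[X]) * alphaPoly R s ℓ i := by
    simp only [alphaPoly, mul_sum]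
    rw [sum_comm]
    refine sum_congr rfl fun k hk => ?_
    rw [hT k (Nat.lt_succ_iff.mp (mem_range.mp hk)), Int.cast_sum, sum_mul]
    refine sum_congr rfl fun i _ => ?_
    push_cast
    ring
  rw [hsum]
  refine (degree_sum_le _ _).trans (Finset.sup_le fun i hi => ?_)
  exact (degree_intCast_mul_le _ _).trans (degree_alphaPoly_le s ℓ (mem_Icc.mp hi).2)

end ExpectedValueBasis

lemma Obs_empty {V : Type*} (G : SimpleGraph V) : Obs G ∅ = ∅ :=
  Set.subset_empty_iff.mp <| Set.sInter_subset_of_mem ⟨by simp [closedNbhd], fun _ hx => hx.elim⟩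

lemma expol_eq_sum_range {V : Type*} (G : SimpleGraph V) (S : Finset V) :
    expol G S = ∑ k ∈ range (S.card + 1),
      (↑(∑ W ∈ powersetCard k S, ((Obs G W).ncard : ℤ)) : ℝ[X])
        * (X ^ (S.card - k) * (1 - X) ^ k) := by
  rw [expol, ← sum_fiberwise_of_maps_to (g := card) (t := range (S.card + 1))
    fun W hW => mem_range.mpr (Nat.lt_succ_of_le (card_le_card (mem_powerset.mp hW)))]
  refine sum_congr rfl fun k _ => ?_
  rw [← powersetCard_eq_filter]
  push_cast
  rw [sum_mul]
  refine sum_congr rfl fun W hW => ?_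
  rw [(mem_powersetCard.mp hW).2, mul_assoc]

theorem stmt4_general {V : Type} (G : SimpleGraph V) (S : Finset V)
    (s ℓ : ℕ) (hs : S.card = s)
    (h : ∀ k, 1 ≤ k → k ≤ s →
      (∑ W ∈ Finset.powersetCard k S, ((Obs G ↑W).ncard : ℤ))
        = ∑ i ∈ Finset.Icc 1 ℓ,
            alphaCoef s ℓ k i * ∑ W ∈ Finset.powersetCard i S, ((Obs G ↑W).ncard : ℤ)) :
    (expol G S).degree ≤ (ℓ : WithBot ℕ) := by
  subst hs
  rw [expol_eq_sum_range]
  refine degree_sum_mul_le_of_eq_sum_alphaCoef _ fun k hk => ?_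
  rcases Nat.eq_zero_or_pos k with rfl | hk0
  · rw [powersetCard_zero, sum_singleton, coe_empty, Obs_empty, Set.ncard_empty, Nat.cast_zero]
    exact (sum_eq_zero fun i hi => by rw [alphaCoef_zero_left _ _ (mem_Icc.mp hi).1, zero_mul]).symm
  · exact h k hk0 hk

theorem stmt4 {V : Type} [Fintype V] (G : SimpleGraph V) (S : Finset V)
    (s ℓ : ℕ) (hs : S.card = s) (hℓ : 1 ≤ ℓ) (hℓs : ℓ ≤ s)
    (h : ∀ k, 1 ≤ k → k ≤ s →
      (∑ W ∈ Finset.powersetCard k S, ((Obs G ↑W).ncard : ℤ))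
        = ∑ i ∈ Finset.Icc 1 ℓ,
            alphaCoef s ℓ k i * ∑ W ∈ Finset.powersetCard i S, ((Obs G ↑W).ncard : ℤ)) :
    (expol G S).degree ≤ (ℓ : WithBot ℕ) :=
  stmt4_general G S s ℓ hs h
end

section
/- Let s ≥ 4 be even and ℓ ∈ ℕ with ℓ > s²·2^{s+1}, and let G := G_s(ℓ) be the graph of the row–column construction built from any 1-factorization M_1,...,M_{s−1} of the complete graph K_s on vertex set {1,...,s}. Let S := { v_{i,2s} : i ∈ {1,...,s} } and K := { v_{i,2} : i ∈ {1,...,s} }. Then for every set A ⊆ V(G) with |A| = s and A ∩ K ≠ ∅, one has E(G;A,q) ≤ E(G;S,q) for all q ∈ [0,1], and E(G;A,q) < E(G;S,q) for all q ∈ (0,1). (Note: vertices of K have degree C(s,2)+2, while all vertices of S have degree 3.) -/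
open Polynomial

/-- The row–column construction `G_s(ℓ)` built from a 1-factorization of `K_s`, encoded by
fixed-point-free involutions `M j : Fin s → Fin s` (the perfect matching `M_j` pairs `i`
with `M j i`).  Vertices are pairs `(i, j)` with `i : Fin s` a row index and `j : Fin (ℓ+2s)`
a 0-based column index (so the paper's 1-based column `c` is the index `c − 1`).  Edges:
`E₁` joins horizontally consecutive vertices; `E₂` makes the (1-based) second column a
clique; `E₃` places the matching `M_j` (1-based `j ∈ {1,…,s−1}`) on the (1-based) column
`2j + 2`, i.e. on the 0-based column `2(j−1) + 3`. -/
def rowColGraph (s ℓ : ℕ) (M : Fin (s - 1) → Fin s → Fin s) :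
    SimpleGraph (Fin s × Fin (ℓ + 2 * s)) :=
  SimpleGraph.fromRel (fun p q =>
    (p.1 = q.1 ∧ (q.2 : ℕ) = (p.2 : ℕ) + 1) ∨
    ((p.2 : ℕ) = 1 ∧ (q.2 : ℕ) = 1) ∨
    (∃ j : Fin (s - 1),
      (p.2 : ℕ) = 2 * (j : ℕ) + 3 ∧ (q.2 : ℕ) = 2 * (j : ℕ) + 3 ∧ M j p.1 = q.1))

/-- The expected number of observed vertices, evaluated at a real failure probability `q`. -/
noncomputable def expolEval {V : Type*} (G : SimpleGraph V) (S : Finset V) (q : ℝ) : ℝ :=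
  ∑ W ∈ S.powerset,
    ((Obs G ↑W).ncard : ℝ) * q ^ (S.card - W.card) * (1 - q) ^ W.card

/-!
A PMU `(i, 2s - 1)` of `S` forces along its row and observes the `ℓ + 2` vertices from column
`2s - 2` on, and all of `S` forces the whole graph column by column to the left; hence
`E(G;S,q) ≥ (ℓ + 2)s(1 - q) + (2s² - 2s)(1 - q)^s`.

For any placement `W`, the even columns and the tail (columns `≥ 2s`) of a row without PMU form a
fort, so at most `#W` tails of length `ℓ` are observed and `|Obs(G;W)| ≤ ℓ #W + 2s²`. A PMU `κ`
on the clique column wastes a tail: either its row carries a second PMU, or, when `W ≠ A`, some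
row `u` carries none and the matching `M_j` joining `u` to the row of `κ` extends the fort of `u`
to the tail of that row. Averaging with the binomial weights,
`E(G;S,q) - E(G;A,q) ≥ q(1 - q)(ℓ + 2s - 2s³)`, which is positive as `ℓ > 2s³`.
-/

open Finset

section PowerDomination

variable {V : Type*} (G : SimpleGraph V) (S : Set V)

lemma mem_closedNbhd {x : V} : x ∈ closedNbhd G S ↔ ∃ v ∈ S, v = x ∨ G.Adj v x := by
  simp [closedNbhd, eq_comm]

lemma closedNbhd_subset_obs : closedNbhd G S ⊆ Obs G S :=
  Set.subset_sInter fun _ hB => hB.1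

lemma obs_subset {B : Set V} (hS : closedNbhd G S ⊆ B) (hB : PDClosed G B) : Obs G S ⊆ B :=
  Set.sInter_subset_of_mem ⟨hS, hB⟩

lemma pdClosed_obs : PDClosed G (Obs G S) := by
  intro x hx y hy B hB
  by_contra hyB
  have hxy : y ∈ G.neighborSet x \ Obs G S := hy ▸ rfl
  refine hyB (hB.2 x (hx B hB) y (Set.Subset.antisymm (fun z hz => ?_) ?_))
  · rw [← hy]
    exact ⟨hz.1, fun hz' => hz.2 (hz' B hB)⟩
  · exact Set.singleton_subset_iff.2 ⟨hxy.1, hyB⟩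

lemma mem_obs_of_mem {v : V} (hv : v ∈ S) : v ∈ Obs G S :=
  closedNbhd_subset_obs G S ((mem_closedNbhd G S).2 ⟨v, hv, Or.inl rfl⟩)

lemma mem_obs_of_adj {v y : V} (hv : v ∈ S) (h : G.Adj v y) : y ∈ Obs G S :=
  closedNbhd_subset_obs G S ((mem_closedNbhd G S).2 ⟨v, hv, Or.inr h⟩)

lemma mem_obs_of_forces {x y : V} (hx : x ∈ Obs G S) (hxy : G.Adj x y)
    (h : ∀ z, G.Adj x z → z ≠ y → z ∈ Obs G S) : y ∈ Obs G S := by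
  by_contra hy
  refine hy (pdClosed_obs G S x hx y (Set.eq_singleton_iff_unique_mem.2 ⟨⟨hxy, hy⟩, ?_⟩))
  exact fun z hz => by_contra fun hzy => hz.2 (h z hz.1 hzy)

lemma obs_empty : Obs G (∅ : Set V) = ∅ :=
  Set.subset_empty_iff.1 <| obs_subset G ∅ (by simp [closedNbhd]) fun _ hx => hx.elim

def IsFort (F : Set V) : Prop :=
  ∀ x ∉ F, ∀ y ∈ F, G.Adj x y → ∃ z ∈ F, G.Adj x z ∧ z ≠ y

variable {G S}

lemma IsFort.disjoint_obs {F : Set V} (hF : IsFort G F) (hS : Disjoint (closedNbhd G S) F) :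
    Disjoint (Obs G S) F := by
  refine Set.subset_compl_iff_disjoint_right.1 (obs_subset G S
    (Set.subset_compl_iff_disjoint_right.2 hS) fun x hx y hy => ?_)
  have hyx : y ∈ G.neighborSet x \ Fᶜ := hy ▸ rfl
  obtain ⟨z, hzF, hxz, hzy⟩ := hF x hx y (not_not.1 hyx.2) hyx.1
  have : z ∈ G.neighborSet x \ Fᶜ := ⟨hxz, not_not.2 hzF⟩
  exact absurd (hy ▸ this : z ∈ ({y} : Set V)) hzy

lemma exists_mem_adj_ne_of_adj {F : Set V} {x z₁ z₂ : V} (h₁ : z₁ ∈ F) (h₂ : z₂ ∈ F)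
    (hx₁ : G.Adj x z₁) (hx₂ : G.Adj x z₂) (hne : z₁ ≠ z₂) (y : V) :
    ∃ z ∈ F, G.Adj x z ∧ z ≠ y := by
  by_cases hy : z₁ = y
  · exact ⟨z₂, h₂, hx₂, hy ▸ hne.symm⟩
  · exact ⟨z₁, h₁, hx₁, hy⟩

end PowerDomination

section Binomial

variable {α : Type*} {p q : ℝ}

lemma sum_powerset_weight (hpq : p + q = 1) (A : Finset α) :
    ∑ W ∈ A.powerset, q ^ (#A - #W) * p ^ #W = 1 := by
  simpa [mul_comm, hpq] using sum_pow_mul_eq_add_pow p q A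

lemma sum_powerset_filter_mem_weight [DecidableEq α] (hpq : p + q = 1) {A : Finset α} {a : α}
    (ha : a ∈ A) :
    ∑ W ∈ A.powerset with a ∈ W, q ^ (#A - #W) * p ^ #W = p := by
  have hnot : A.powerset.filter (a ∉ ·) = (A.erase a).powerset := by
    ext W
    simp [subset_erase]
  have hq : ∑ W ∈ A.powerset with a ∉ W, q ^ (#A - #W) * p ^ #W = q := by
    rw [hnot]
    calc ∑ W ∈ (A.erase a).powerset, q ^ (#A - #W) * p ^ #W
        = q * ∑ W ∈ (A.erase a).powerset, q ^ (#(A.erase a) - #W) * p ^ #W := by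
          rw [mul_sum]
          refine sum_congr rfl fun W hW => ?_
          have hWA : #W ≤ #A - 1 := card_erase_of_mem ha ▸ card_le_card (mem_powerset.1 hW)
          have hA : 1 ≤ #A := card_pos.2 ⟨a, ha⟩
          rw [card_erase_of_mem ha, show #A - #W = (#A - 1 - #W) + 1 by omega, pow_succ]
          ring
      _ = q := by rw [sum_powerset_weight hpq, mul_one]
  linarith [sum_filter_add_sum_filter_not A.powerset (a ∈ ·) fun W => q ^ (#A - #W) * p ^ #W,
    sum_powerset_weight hpq A]

lemma sum_powerset_card_mul_weight [DecidableEq α] (hpq : p + q = 1) (A : Finset α) :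
    ∑ W ∈ A.powerset, (#W : ℝ) * (q ^ (#A - #W) * p ^ #W) = #A * p := by
  calc ∑ W ∈ A.powerset, (#W : ℝ) * (q ^ (#A - #W) * p ^ #W)
      = ∑ W ∈ A.powerset, ∑ a ∈ A, if a ∈ W then q ^ (#A - #W) * p ^ #W else 0 := by
        refine sum_congr rfl fun W hW => ?_
        rw [sum_ite_mem, sum_const, inter_eq_right.2 (mem_powerset.1 hW), nsmul_eq_mul]
    _ = ∑ a ∈ A, ∑ W ∈ A.powerset with a ∈ W, q ^ (#A - #W) * p ^ #W := by
        rw [sum_comm]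
        simp only [sum_filter]
    _ = #A * p := by
        rw [sum_congr rfl fun a ha => sum_powerset_filter_mem_weight hpq ha, sum_const,
          nsmul_eq_mul]

end Binomial

lemma expectation_gap {n : ℕ} (hn : 2 ≤ n) {L p q : ℝ} (hL : 2 * n ^ 2 ≤ L + 2 * n)
    (hp : 0 ≤ p) (hq : 0 ≤ q) (hpq : p + q = 1) :
    L * n * p + 2 * n ^ 2 * (1 - q ^ n) - L * (p - p ^ n) + p * q * (L + 2 * n - 2 * n ^ 3) ≤
      (L + 2) * n * p + (2 * n ^ 2 - 2 * n) * p ^ n := by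
  obtain ⟨k, rfl⟩ : ∃ k, n = k + 1 := ⟨n - 1, by omega⟩
  set Sq := ∑ m ∈ range (k + 1), q ^ m
  set Sp := ∑ m ∈ range k, p ^ m
  have hSq : 1 - q ^ (k + 1) = p * Sq := by linear_combination geom_sum_mul q (k + 1) - Sq * hpq
  have hSp : p ^ (k + 1) = p * (1 - q * Sp) := by
    linear_combination -p * geom_sum_mul p k + p * Sp * hpq
  have hSq_le : Sq ≤ 1 + k * q := by
    have : ∑ m ∈ range k, q ^ (m + 1) ≤ ∑ _m ∈ range k, q :=
      sum_le_sum fun m _ => pow_le_of_le_one hq (by linarith) m.succ_ne_zero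
    rw [sum_const, card_range, nsmul_eq_mul] at this
    rw [show Sq = _ from sum_range_succ' _ k, pow_zero]
    linarith
  have hSp_ge : 1 ≤ Sp := by
    simpa using single_le_sum (f := fun m => p ^ m) (fun m _ => pow_nonneg hp m)
      (mem_range.2 (by omega : 0 < k))
  -- substituting the geometric sums for `q ^ n` and `p ^ n` leaves two nonnegative terms
  have hgap : (L + 2) * ↑(k + 1) * p + (2 * ↑(k + 1) ^ 2 - 2 * ↑(k + 1)) * p ^ (k + 1) -
      (L * ↑(k + 1) * p + 2 * ↑(k + 1) ^ 2 * (1 - q ^ (k + 1)) - L * (p - p ^ (k + 1)) +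
        p * q * (L + 2 * ↑(k + 1) - 2 * ↑(k + 1) ^ 3)) =
      2 * ↑(k + 1) ^ 2 * p * (1 + k * q - Sq) +
        p * q * (Sp - 1) * (L + 2 * ↑(k + 1) - 2 * ↑(k + 1) ^ 2) := by
    push_cast
    linear_combination
      -2 * ((k : ℝ) + 1) ^ 2 * hSq + (2 * ((k : ℝ) + 1) ^ 2 - 2 * (k + 1) - L) * hSp
  have h₁ : 0 ≤ 2 * ↑(k + 1) ^ 2 * p * (1 + k * q - Sq) := by
    have := sub_nonneg.2 hSq_le
    positivity
  have h₂ : 0 ≤ p * q * (Sp - 1) * (L + 2 * ↑(k + 1) - 2 * ↑(k + 1) ^ 2) :=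
    mul_nonneg (mul_nonneg (mul_nonneg hp hq) (sub_nonneg.2 hSp_ge)) (by linarith)
  linarith

section RowColGraph

variable {s ℓ : ℕ} {M : Fin (s - 1) → Fin s → Fin s}

/-- The (0-based) columns carrying no edge between distinct rows: the clique sits on column
`1` and `M_j` on column `2j + 3`, so these are the even columns and those beyond `2s - 1`. -/
def IsPlainCol (s c : ℕ) : Prop := c % 2 = 0 ∨ 2 * s ≤ c

lemma rowColGraph_adj_cases (hM1 : ∀ j, Function.Involutive (M j))
    {x y : Fin s × Fin (ℓ + 2 * s)} (h : (rowColGraph s ℓ M).Adj x y) :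
    (y.1 = x.1 ∧ ((y.2 : ℕ) = x.2 + 1 ∨ (y.2 : ℕ) + 1 = x.2)) ∨
    ((x.2 : ℕ) = 1 ∧ (y.2 : ℕ) = 1) ∨
    ∃ j : Fin (s - 1), (x.2 : ℕ) = 2 * j + 3 ∧ (y.2 : ℕ) = 2 * j + 3 ∧ y.1 = M j x.1 := by
  rw [rowColGraph, SimpleGraph.fromRel_adj] at h
  obtain ⟨-, h | h⟩ := h <;>
    rcases h with ⟨h1, h2⟩ | ⟨h1, h2⟩ | ⟨j, h1, h2, h3⟩
  · exact .inl ⟨h1.symm, .inl h2⟩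
  · exact .inr (.inl ⟨h1, h2⟩)
  · exact .inr (.inr ⟨j, h1, h2, h3.symm⟩)
  · exact .inl ⟨h1, .inr h2.symm⟩
  · exact .inr (.inl ⟨h2, h1⟩)
  · exact .inr (.inr ⟨j, h2, h1, by rw [← h3, hM1]⟩)

lemma rowColGraph_adj_of_isPlainCol (hM1 : ∀ j, Function.Involutive (M j))
    {x y : Fin s × Fin (ℓ + 2 * s)} (h : (rowColGraph s ℓ M).Adj x y)
    (hx : IsPlainCol s x.2) : y.1 = x.1 ∧ ((y.2 : ℕ) = x.2 + 1 ∨ (y.2 : ℕ) + 1 = x.2) := by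
  rcases rowColGraph_adj_cases hM1 h with h | ⟨h1, -⟩ | ⟨j, h1, -, -⟩
  · exact h
  · unfold IsPlainCol at hx; have := x.1.isLt; omega
  · unfold IsPlainCol at hx; have := j.isLt; omega

lemma rowColGraph_adj_col_le (hM1 : ∀ j, Function.Involutive (M j))
    {x y : Fin s × Fin (ℓ + 2 * s)} (h : (rowColGraph s ℓ M).Adj x y) :
    (y.1 = x.1 ∧ (y.2 : ℕ) + 1 = x.2) ∨ (x.2 : ℕ) ≤ y.2 := by
  rcases rowColGraph_adj_cases hM1 h with ⟨h1, h2 | h2⟩ | ⟨h1, h2⟩ | ⟨j, h1, h2, -⟩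
  · exact .inr (by omega)
  · exact .inl ⟨h1, h2⟩
  all_goals exact .inr (by omega)

lemma rowColGraph_adj_of_succ (i : Fin s) {c c' : Fin (ℓ + 2 * s)} (h : (c' : ℕ) = c + 1) :
    (rowColGraph s ℓ M).Adj (i, c) (i, c') := by
  rw [rowColGraph, SimpleGraph.fromRel_adj]
  refine ⟨fun he => ?_, .inl (.inl ⟨rfl, h⟩)⟩
  simp only [Prod.mk.injEq, Fin.ext_iff, true_and] at he
  omega

lemma rowColGraph_adj_of_match {j : Fin (s - 1)} {i i' : Fin s} {c : Fin (ℓ + 2 * s)}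
    (hc : (c : ℕ) = 2 * j + 3) (h : M j i = i') (hne : i ≠ i') :
    (rowColGraph s ℓ M).Adj (i, c) (i', c) := by
  rw [rowColGraph, SimpleGraph.fromRel_adj]
  exact ⟨fun he => hne (congrArg Prod.fst he), .inl (.inr (.inr ⟨j, hc, hc, h⟩))⟩

lemma rowColGraph_exists_row_adj_ne {F : Set (Fin s × Fin (ℓ + 2 * s))}
    {x : Fin s × Fin (ℓ + 2 * s)} (h1 : 1 ≤ (x.2 : ℕ)) (h2 : (x.2 : ℕ) + 1 < ℓ + 2 * s)
    (hF : ∀ c : Fin (ℓ + 2 * s), (c : ℕ) + 1 = x.2 ∨ (c : ℕ) = x.2 + 1 → (x.1, c) ∈ F)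
    (y : Fin s × Fin (ℓ + 2 * s)) :
    ∃ z ∈ F, (rowColGraph s ℓ M).Adj x z ∧ z ≠ y := by
  let cl : Fin (ℓ + 2 * s) := ⟨x.2 - 1, by omega⟩
  let cr : Fin (ℓ + 2 * s) := ⟨x.2 + 1, h2⟩
  refine exists_mem_adj_ne_of_adj (hF cl (.inl (by simp only [cl]; omega))) (hF cr (.inr rfl))
    ((rowColGraph_adj_of_succ x.1 (by simp only [cl]; omega)).symm)
    (rowColGraph_adj_of_succ x.1 rfl) (fun he => ?_) y
  simp [Prod.ext_iff, Fin.ext_iff, cl, cr] at he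

end RowColGraph

section Observation

variable {s ℓ : ℕ} {M : Fin (s - 1) → Fin s → Fin s}

lemma mem_obs_rowColGraph_of_tail (hM1 : ∀ j, Function.Involutive (M j)) (hs : 1 ≤ s)
    {W : Set (Fin s × Fin (ℓ + 2 * s))} {i : Fin s} {c₀ : Fin (ℓ + 2 * s)}
    (hc₀ : (c₀ : ℕ) = 2 * s - 1) (hi : (i, c₀) ∈ W) {c : Fin (ℓ + 2 * s)}
    (hc : 2 * s - 2 ≤ (c : ℕ)) : (i, c) ∈ Obs (rowColGraph s ℓ M) W := by
  let P : ℕ → Prop := fun n => ∀ c : Fin (ℓ + 2 * s), (c : ℕ) = n →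
    (i, c) ∈ Obs (rowColGraph s ℓ M) W
  have hP : ∀ n, 2 * s - 1 ≤ n → P n ∧ P (n + 1) := by
    intro n hn
    induction n, hn using Nat.le_induction with
    | base =>
      refine ⟨fun c hc => ?_, fun c hc => ?_⟩
      · rw [show c = c₀ from Fin.ext (by omega)]
        exact mem_obs_of_mem _ _ hi
      · exact mem_obs_of_adj _ _ hi (rowColGraph_adj_of_succ i (by omega))
    | succ n hn ih =>
      refine ⟨ih.2, fun c hc => ?_⟩
      let c' : Fin (ℓ + 2 * s) := ⟨n + 1, by omega⟩
      refine mem_obs_of_forces _ _ (ih.2 c' rfl)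
        (rowColGraph_adj_of_succ i (show (c : ℕ) = n + 1 + 1 by omega)) fun z hz hzc => ?_
      obtain ⟨hz1, hz2 | hz2⟩ :=
        rowColGraph_adj_of_isPlainCol hM1 hz (.inr (by simp only [c']; omega))
      · exact absurd (Prod.ext hz1 (Fin.ext (by simp only [c'] at hz2 ⊢; omega)) : z = (i, c)) hzc
      · rw [show z = (i, z.2) from Prod.ext hz1 rfl]
        exact ih.1 z.2 (by simp only [c'] at hz2; omega)
  by_cases hc' : (c : ℕ) = 2 * s - 2
  · exact mem_obs_of_adj _ _ hi (rowColGraph_adj_of_succ i (by omega)).symm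
  · exact (hP c (by omega)).1 c rfl

lemma obs_rowColGraph_eq_univ (hM1 : ∀ j, Function.Involutive (M j)) (hs : 1 ≤ s)
    {W : Set (Fin s × Fin (ℓ + 2 * s))}
    (hW : ∀ x : Fin s × Fin (ℓ + 2 * s), (x.2 : ℕ) = 2 * s - 1 → x ∈ W) :
    Obs (rowColGraph s ℓ M) W = Set.univ := by
  suffices h : ∀ m, ∀ x : Fin s × Fin (ℓ + 2 * s), 2 * s - 2 ≤ (x.2 : ℕ) + m →
      x ∈ Obs (rowColGraph s ℓ M) W from
    Set.eq_univ_of_forall fun x => h (2 * s) x (by omega)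
  intro m
  induction m with
  | zero =>
    exact fun x hx => mem_obs_rowColGraph_of_tail hM1 hs
      (c₀ := (⟨2 * s - 1, by omega⟩ : Fin (ℓ + 2 * s))) rfl (hW _ rfl) hx
  | succ m ih =>
    intro x hx
    by_cases h : 2 * s - 2 ≤ (x.2 : ℕ) + m
    · exact ih x h
    let c' : Fin (ℓ + 2 * s) := ⟨x.2 + 1, by omega⟩
    refine mem_obs_of_forces _ _ (ih (x.1, c') (by simp only [c']; omega))
      (rowColGraph_adj_of_succ x.1 rfl).symm fun z hz hzx => ?_
    rcases rowColGraph_adj_col_le hM1 hz with ⟨h1, h2⟩ | h2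
    · exact absurd (Prod.ext h1 (Fin.ext (by simp only [c'] at h2; omega)) : z = x) hzx
    · exact ih z (by simp only [c'] at h2; omega)

lemma isFort_rowColGraph_row (hM1 : ∀ j, Function.Involutive (M j)) (hℓ : 0 < ℓ) (u : Fin s) :
    IsFort (rowColGraph s ℓ M) {x | x.1 = u ∧ IsPlainCol s x.2} := by
  rintro x hx y ⟨hyu, hy⟩ hxy
  obtain ⟨hxy1, -⟩ := rowColGraph_adj_of_isPlainCol hM1 hxy.symm hy
  have hxu : x.1 = u := hxy1.trans hyu
  have hx' : ¬ IsPlainCol s x.2 := fun h => hx ⟨hxu, h⟩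
  unfold IsPlainCol at hx'
  exact rowColGraph_exists_row_adj_ne (F := {x | x.1 = u ∧ IsPlainCol s x.2}) (by omega)
    (by omega) (fun c hc => ⟨hxu, .inl (show (c : ℕ) % 2 = 0 by omega)⟩) y

lemma disjoint_obs_rowColGraph_row (hM1 : ∀ j, Function.Involutive (M j)) (hℓ : 0 < ℓ)
    {W : Set (Fin s × Fin (ℓ + 2 * s))} {u : Fin s} (hu : ∀ v ∈ W, v.1 ≠ u) :
    Disjoint (Obs (rowColGraph s ℓ M) W) {x | x.1 = u ∧ IsPlainCol s x.2} := by
  refine (isFort_rowColGraph_row hM1 hℓ u).disjoint_obs (Set.disjoint_right.2 ?_)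
  rintro x ⟨hxu, hx⟩ hxN
  obtain ⟨v, hv, rfl | hvx⟩ := (mem_closedNbhd _ _).1 hxN
  · exact hu v hv hxu
  · exact hu v hv ((rowColGraph_adj_of_isPlainCol hM1 hvx.symm hx).1.trans hxu)

lemma mem_image_fst_of_mem_obs_rowColGraph (hM1 : ∀ j, Function.Involutive (M j))
    (hℓ : 0 < ℓ) {W : Finset (Fin s × Fin (ℓ + 2 * s))} {x : Fin s × Fin (ℓ + 2 * s)}
    (hx : x ∈ Obs (rowColGraph s ℓ M) W) (hx2 : 2 * s ≤ (x.2 : ℕ)) :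
    x.1 ∈ W.image Prod.fst := by
  by_contra h
  refine Set.disjoint_left.1 (disjoint_obs_rowColGraph_row hM1 hℓ (u := x.1)
    fun v hv he => h (mem_image.2 ⟨v, hv, he⟩)) hx ⟨rfl, .inr hx2⟩

lemma isFort_rowColGraph_pair (hM1 : ∀ j, Function.Involutive (M j)) (hℓ : 0 < ℓ)
    {j : Fin (s - 1)} {u r : Fin s} (hj : M j u = r) (hur : u ≠ r) :
    IsFort (rowColGraph s ℓ M) ({x | x.1 = u ∧ IsPlainCol s x.2} ∪
      ({x | x.1 = u ∧ (x.2 : ℕ) = 2 * j + 3} ∪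
        {x | x.1 = r ∧ 2 * (j : ℕ) + 3 < x.2 ∧ IsPlainCol s x.2})) := by
  set F : Set (Fin s × Fin (ℓ + 2 * s)) := {x | x.1 = u ∧ IsPlainCol s x.2} ∪
    ({x | x.1 = u ∧ (x.2 : ℕ) = 2 * j + 3} ∪
      {x | x.1 = r ∧ 2 * (j : ℕ) + 3 < x.2 ∧ IsPlainCol s x.2})
  have hjr : M j r = u := by rw [← hj, hM1]
  have hjs := j.isLt
  have hpivot : ∀ x : Fin s × Fin (ℓ + 2 * s), x.1 = r → (x.2 : ℕ) = 2 * j + 3 → ∀ y,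
      ∃ z ∈ F, (rowColGraph s ℓ M).Adj x z ∧ z ≠ y := by
    rintro ⟨i, c⟩ (rfl : i = r) (hc : (c : ℕ) = 2 * j + 3) y
    let c' : Fin (ℓ + 2 * s) := ⟨2 * j + 4, by omega⟩
    refine exists_mem_adj_ne_of_adj (z₁ := (u, c)) (z₂ := (i, c'))
      (.inr (.inl ⟨rfl, hc⟩)) (.inr (.inr ⟨rfl, show 2 * (j : ℕ) + 3 < 2 * j + 4 by omega,
        .inl (show (2 * (j : ℕ) + 4) % 2 = 0 by omega)⟩))
      (rowColGraph_adj_of_match hc hjr hur.symm)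
      (rowColGraph_adj_of_succ i (show 2 * (j : ℕ) + 4 = c + 1 by omega)) (by simp [hur]) y
  rintro x hx y hy hxy
  rcases hy with hy | ⟨hyu, hyc⟩ | ⟨hyr, hyc, hy⟩
  · obtain ⟨z, hz, h⟩ := isFort_rowColGraph_row hM1 hℓ u x (fun h => hx (.inl h)) y hy hxy
    exact ⟨z, .inl hz, h⟩
  · rcases rowColGraph_adj_cases hM1 hxy.symm with ⟨h1, h2⟩ | ⟨h1, -⟩ | ⟨j', h1, h2, h3⟩
    · exact absurd (.inl ⟨h1.trans hyu, .inl (by omega)⟩) hx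
    · omega
    · obtain rfl : j' = j := Fin.ext (by omega)
      exact hpivot x (by rw [h3, hyu, hj]) (by omega) y
  · obtain ⟨h1, h2⟩ := rowColGraph_adj_of_isPlainCol hM1 hxy.symm hy
    have hxr : x.1 = r := h1.trans hyr
    by_cases hxc : (x.2 : ℕ) = 2 * j + 3
    · exact hpivot x hxr hxc y
    · have hx' : ¬ IsPlainCol s x.2 := fun h => hx (.inr (.inr ⟨hxr, by omega, h⟩))
      unfold IsPlainCol at hx' hy
      exact rowColGraph_exists_row_adj_ne (by omega) (by omega)
        (fun c hc => .inr (.inr ⟨hxr, show 2 * (j : ℕ) + 3 < c by omega,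
          .inl (show (c : ℕ) % 2 = 0 by omega)⟩)) y

lemma notMem_obs_rowColGraph_of_pair (hM1 : ∀ j, Function.Involutive (M j)) (hℓ : 0 < ℓ)
    {j : Fin (s - 1)} {u r : Fin s} (hj : M j u = r) (hur : u ≠ r)
    {W : Set (Fin s × Fin (ℓ + 2 * s))} (hW : ∀ v ∈ W, v.1 ≠ u ∧ (v.1 = r → (v.2 : ℕ) = 1))
    {x : Fin s × Fin (ℓ + 2 * s)} (hxr : x.1 = r) (hx2 : 2 * s ≤ (x.2 : ℕ)) :
    x ∉ Obs (rowColGraph s ℓ M) W := by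
  have hjs := j.isLt
  intro hx
  refine Set.disjoint_left.1 ((isFort_rowColGraph_pair hM1 hℓ hj hur).disjoint_obs
    (Set.disjoint_right.2 ?_)) hx (.inr (.inr ⟨hxr, by omega, .inr hx2⟩))
  intro y hy hyN
  obtain ⟨v, hv, hvy⟩ := (mem_closedNbhd _ _).1 hyN
  obtain ⟨hvu, hvr⟩ := hW v hv
  rcases hy with hy | ⟨hyu, hyc⟩ | ⟨hyr, hyc, hy⟩
  · exact Set.disjoint_left.1 (disjoint_obs_rowColGraph_row hM1 hℓ fun v hv => (hW v hv).1)
      (closedNbhd_subset_obs _ _ hyN) hy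
  · rcases hvy with rfl | hvy
    · exact hvu hyu
    rcases rowColGraph_adj_cases hM1 hvy with ⟨h1, -⟩ | ⟨-, h2⟩ | ⟨j', h1, h2, h3⟩
    · exact hvu (h1 ▸ hyu)
    · omega
    · obtain rfl : j' = j := Fin.ext (by omega)
      have : v.1 = r := by rw [← hj, ← hyu, h3, hM1]
      have := hvr this
      omega
  · rcases hvy with rfl | hvy
    · have := hvr hyr
      omega
    obtain ⟨h1, h2⟩ := rowColGraph_adj_of_isPlainCol hM1 hvy.symm hy
    have := hvr (h1.trans hyr)
    omega

end Observation

section Counting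

variable {s ℓ : ℕ} {M : Fin (s - 1) → Fin s → Fin s}

lemma Fin.card_filter_le_val {n : ℕ} (a : ℕ) (ha : a ≤ n) : #{c : Fin n | a ≤ (c : ℕ)} = n - a := by
  have h := card_filter_add_card_filter_not (s := (univ : Finset (Fin n))) (fun c => (c : ℕ) < a)
  simp only [not_lt, Fin.card_filter_val_lt, card_univ, Fintype.card_fin] at h
  omega

lemma ncard_le_of_tail_rows (O : Set (Fin s × Fin (ℓ + 2 * s))) (T : Finset (Fin s))
    (hT : ∀ x ∈ O, 2 * s ≤ (x.2 : ℕ) → x.1 ∈ T) : O.ncard ≤ #T * ℓ + 2 * s * s := by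
  classical
  let tail : Finset (Fin (ℓ + 2 * s)) := {c | 2 * s ≤ (c : ℕ)}
  let head : Finset (Fin (ℓ + 2 * s)) := {c | (c : ℕ) < 2 * s}
  have hOU : O ⊆ ↑(T ×ˢ tail ∪ univ ×ˢ head) := fun x hx => by
    by_cases h : 2 * s ≤ (x.2 : ℕ)
    · simp [tail, h, hT x hx h]
    · simp [head, not_le.1 h]
  calc O.ncard ≤ #(T ×ˢ tail ∪ univ ×ˢ head) := by
        rw [← Set.ncard_coe_finset]
        exact Set.ncard_le_ncard hOU (Set.toFinite _)
    _ ≤ #(T ×ˢ tail) + #(univ ×ˢ head) := card_union_le _ _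
    _ = #T * ℓ + 2 * s * s := by
        rw [card_product, card_product, Fin.card_filter_le_val _ (by omega), Fin.card_filter_val_lt]
        simp [mul_comm]

lemma card_mul_le_ncard_obs_rowColGraph (hM1 : ∀ j, Function.Involutive (M j)) (hs : 1 ≤ s)
    {c₀ : Fin (ℓ + 2 * s)} (hc₀ : (c₀ : ℕ) = 2 * s - 1) {W : Finset (Fin s × Fin (ℓ + 2 * s))}
    (hW : ∀ w ∈ W, w.2 = c₀) : #W * (ℓ + 2) ≤ (Obs (rowColGraph s ℓ M) W).ncard := by
  classical
  let tail : Finset (Fin (ℓ + 2 * s)) := {c | 2 * s - 2 ≤ (c : ℕ)}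
  let U := W.image Prod.fst ×ˢ tail
  have hUW : (U : Set (Fin s × Fin (ℓ + 2 * s))) ⊆ Obs (rowColGraph s ℓ M) W := by
    intro x hx
    obtain ⟨⟨w, hw, hwx⟩, hx2⟩ : (∃ w ∈ W, w.1 = x.1) ∧ 2 * s - 2 ≤ (x.2 : ℕ) := by
      simpa [U, tail] using hx
    exact mem_obs_rowColGraph_of_tail hM1 hs hc₀
      (by rw [← hwx, ← hW w hw]; exact mem_coe.2 hw) hx2
  have hrows : #(W.image Prod.fst) = #W :=
    card_image_of_injOn fun v hv w hw h => Prod.ext h ((hW v hv).trans (hW w hw).symm)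
  calc #W * (ℓ + 2) = #U := by
        rw [card_product, hrows, Fin.card_filter_le_val _ (by omega)]
        congr 1
        omega
    _ ≤ _ := by
        rw [← Set.ncard_coe_finset]
        exact Set.ncard_le_ncard hUW (Set.toFinite _)

end Counting

section Bounds

variable {s ℓ : ℕ} {M : Fin (s - 1) → Fin s → Fin s}

lemma ncard_obs_rowColGraph_le (hM1 : ∀ j, Function.Involutive (M j)) (hℓ : 0 < ℓ)
    (W : Finset (Fin s × Fin (ℓ + 2 * s))) :
    (Obs (rowColGraph s ℓ M) W).ncard ≤ #W * ℓ + 2 * s * s := by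
  classical
  calc (Obs (rowColGraph s ℓ M) W).ncard ≤ #(W.image Prod.fst) * ℓ + 2 * s * s :=
        ncard_le_of_tail_rows _ _ fun _ hx hx2 =>
          mem_image_fst_of_mem_obs_rowColGraph hM1 hℓ hx hx2
    _ ≤ #W * ℓ + 2 * s * s := by gcongr; exact card_image_le

lemma ncard_obs_rowColGraph_add_le (hM1 : ∀ j, Function.Involutive (M j))
    (hM : ∀ i i' : Fin s, i ≠ i' → ∃ j, M j i = i') (hℓ : 0 < ℓ)
    {W : Finset (Fin s × Fin (ℓ + 2 * s))} {κ : Fin s × Fin (ℓ + 2 * s)} (hκ : κ ∈ W)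
    (hκ2 : (κ.2 : ℕ) = 1) (hW : #W < s) :
    (Obs (rowColGraph s ℓ M) W).ncard + ℓ ≤ #W * ℓ + 2 * s * s := by
  classical
  suffices h : ∃ T : Finset (Fin s), #T + 1 ≤ #W ∧
      ∀ x ∈ Obs (rowColGraph s ℓ M) W, 2 * s ≤ (x.2 : ℕ) → x.1 ∈ T by
    obtain ⟨T, hT, hTObs⟩ := h
    have := ncard_le_of_tail_rows _ T hTObs
    nlinarith
  have hκ1 : κ.1 ∈ W.image Prod.fst := mem_image_of_mem _ hκ
  by_cases hrow : ∃ v ∈ W, v.1 = κ.1 ∧ v ≠ κ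
  · obtain ⟨v, hv, hv1, hvκ⟩ := hrow
    refine ⟨(W.erase v).image Prod.fst, ?_, fun x hx hx2 => ?_⟩
    · have := card_image_le (s := W.erase v) (f := Prod.fst)
      rw [card_erase_of_mem hv] at this
      have := card_pos.2 ⟨v, hv⟩
      omega
    · obtain ⟨w, hw, hwx⟩ := mem_image.1 (mem_image_fst_of_mem_obs_rowColGraph hM1 hℓ hx hx2)
      by_cases hwv : w = v
      · exact mem_image.2 ⟨κ, mem_erase.2 ⟨hvκ.symm, hκ⟩, by rw [← hwx, hwv, hv1]⟩
      · exact mem_image.2 ⟨w, mem_erase.2 ⟨hwv, hw⟩, hwx⟩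
  · push Not at hrow
    obtain ⟨u, -, hu⟩ := exists_mem_notMem_of_card_lt_card (s := W.image Prod.fst)
      (t := univ) (card_image_le.trans_lt (by rwa [card_univ, Fintype.card_fin]))
    have hur : u ≠ κ.1 := fun h => hu (h ▸ hκ1)
    obtain ⟨j, hj⟩ := hM u κ.1 hur
    refine ⟨(W.image Prod.fst).erase κ.1, ?_, fun x hx hx2 => mem_erase.2
      ⟨fun hxr => ?_, mem_image_fst_of_mem_obs_rowColGraph hM1 hℓ hx hx2⟩⟩
    · rw [card_erase_of_mem hκ1]
      have := card_image_le (s := W) (f := Prod.fst)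
      have := card_pos.2 ⟨_, hκ1⟩
      omega
    · refine notMem_obs_rowColGraph_of_pair hM1 hℓ hj hur (fun v hv =>
        ⟨fun h => hu (mem_image.2 ⟨v, hv, h⟩), fun h => ?_⟩) hxr hx2 hx
      rw [hrow v hv h, hκ2]

end Bounds

section Expectation

variable {s ℓ : ℕ} {M : Fin (s - 1) → Fin s → Fin s}

lemma ncard_obs_rowColGraph_le_of_subset (hM1 : ∀ j, Function.Involutive (M j))
    (hM : ∀ i i' : Fin s, i ≠ i' → ∃ j, M j i = i') (hℓ : 0 < ℓ)
    {A : Finset (Fin s × Fin (ℓ + 2 * s))} (hA : #A = s) {κ : Fin s × Fin (ℓ + 2 * s)}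
    (hκ : κ ∈ A) (hκ2 : (κ.2 : ℕ) = 1) {W : Finset (Fin s × Fin (ℓ + 2 * s))} (hWA : W ⊆ A) :
    ((Obs (rowColGraph s ℓ M) W).ncard : ℝ) ≤ ℓ * #W + 2 * s ^ 2 -
      (if W = ∅ then (2 * s ^ 2 : ℝ) else 0) - (if κ ∈ W then (ℓ : ℝ) else 0) +
      (if W = A then (ℓ : ℝ) else 0) := by
  by_cases h0 : W = ∅
  · subst h0
    simp only [coe_empty, obs_empty, Set.ncard_empty, CharP.cast_eq_zero, card_empty, mul_zero,
      zero_add, ↓reduceIte, sub_self, notMem_empty]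
    split_ifs <;> positivity
  rw [if_neg h0]
  by_cases hκW : κ ∈ W
  · rw [if_pos hκW]
    by_cases hWA' : W = A
    · have := Set.ncard_le_ncard (Set.subset_univ (Obs (rowColGraph s ℓ M) W))
      simp only [Set.ncard_univ, Nat.card_eq_fintype_card, Fintype.card_prod,
        Fintype.card_fin] at this
      have : ((Obs (rowColGraph s ℓ M) W).ncard : ℝ) ≤ s * (ℓ + 2 * s) := by exact_mod_cast this
      rw [if_pos hWA', show #W = s from hWA' ▸ hA]
      linarith
    · have := ncard_obs_rowColGraph_add_le hM1 hM hℓ hκW hκ2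
        (hA ▸ card_lt_card (ssubset_of_subset_of_ne hWA hWA') :)
      have : ((Obs (rowColGraph s ℓ M) W).ncard : ℝ) + ℓ ≤ #W * ℓ + 2 * s * s := by
        exact_mod_cast this
      rw [if_neg hWA']
      linarith
  · have := ncard_obs_rowColGraph_le hM1 hℓ (M := M) W
    have : ((Obs (rowColGraph s ℓ M) W).ncard : ℝ) ≤ #W * ℓ + 2 * s * s := by
      exact_mod_cast this
    rw [if_neg hκW, if_neg (ne_of_mem_of_not_mem' hκ hκW).symm]
    linarith

lemma expolEval_rowColGraph_le (hM1 : ∀ j, Function.Involutive (M j))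
    (hM : ∀ i i' : Fin s, i ≠ i' → ∃ j, M j i = i') (hℓ : 0 < ℓ)
    {A : Finset (Fin s × Fin (ℓ + 2 * s))} (hA : #A = s) {κ : Fin s × Fin (ℓ + 2 * s)}
    (hκ : κ ∈ A) (hκ2 : (κ.2 : ℕ) = 1) {q : ℝ} (hq0 : 0 ≤ q) (hq1 : q ≤ 1) :
    expolEval (rowColGraph s ℓ M) A q ≤
      ℓ * s * (1 - q) + 2 * s ^ 2 * (1 - q ^ s) - ℓ * ((1 - q) - (1 - q) ^ s) := by
  classical
  have hpq : (1 - q) + q = 1 := sub_add_cancel 1 q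
  let b : Finset (Fin s × Fin (ℓ + 2 * s)) → ℝ := fun W =>
    ℓ * #W + 2 * s ^ 2 - (if W = ∅ then (2 * s ^ 2 : ℝ) else 0) - (if κ ∈ W then (ℓ : ℝ) else 0)
      + (if W = A then (ℓ : ℝ) else 0)
  have hb : ∀ W ∈ A.powerset, ((Obs (rowColGraph s ℓ M) W).ncard : ℝ) ≤ b W := fun W hW =>
    ncard_obs_rowColGraph_le_of_subset hM1 hM hℓ hA hκ hκ2 (mem_powerset.1 hW)
  calc expolEval (rowColGraph s ℓ M) A q
      ≤ ∑ W ∈ A.powerset, b W * (q ^ (#A - #W) * (1 - q) ^ #W) := by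
        refine sum_le_sum fun W hW => ?_
        rw [mul_assoc]
        exact mul_le_mul_of_nonneg_right (hb W hW) (by positivity)
    _ = ℓ * s * (1 - q) + 2 * s ^ 2 * (1 - q ^ s) - ℓ * ((1 - q) - (1 - q) ^ s) := by
        simp only [b, add_mul, sub_mul, sum_add_distrib, sum_sub_distrib, ite_mul, zero_mul,
          sum_ite_eq', ← sum_filter, mul_assoc, ← mul_sum, empty_mem_powerset, mem_powerset_self,
          if_true, card_empty]
        rw [sum_powerset_weight hpq, sum_powerset_card_mul_weight hpq,
          sum_powerset_filter_mem_weight hpq hκ, hA, Nat.sub_self, Nat.sub_zero, pow_zero]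
        ring

lemma le_expolEval_rowColGraph (hM1 : ∀ j, Function.Involutive (M j)) (hs : 1 ≤ s)
    {c₀ : Fin (ℓ + 2 * s)} (hc₀ : (c₀ : ℕ) = 2 * s - 1) {q : ℝ} (hq0 : 0 ≤ q) (hq1 : q ≤ 1) :
    (ℓ + 2) * s * (1 - q) + (2 * s ^ 2 - 2 * s) * (1 - q) ^ s ≤
      expolEval (rowColGraph s ℓ M) (univ.image fun i => (i, c₀)) q := by
  classical
  have hpq : (1 - q) + q = 1 := sub_add_cancel 1 q
  set S : Finset (Fin s × Fin (ℓ + 2 * s)) := univ.image fun i => (i, c₀) with hS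
  have hScard : #S = s := by
    rw [card_image_of_injective _ fun i i' h => congrArg Prod.fst h, card_univ, Fintype.card_fin]
  let b : Finset (Fin s × Fin (ℓ + 2 * s)) → ℝ := fun W =>
    (ℓ + 2) * #W + (if W = S then (2 * s ^ 2 - 2 * s : ℝ) else 0)
  have hb : ∀ W ∈ S.powerset, b W ≤ ((Obs (rowColGraph s ℓ M) W).ncard : ℝ) := by
    intro W hW
    by_cases hWS : W = S
    · have hObs : Obs (rowColGraph s ℓ M) S = Set.univ := by
        refine obs_rowColGraph_eq_univ hM1 hs fun x hx => ?_
        rw [hS, coe_image, coe_univ, Set.image_univ]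
        exact ⟨x.1, Prod.ext rfl (Fin.ext (hx.trans hc₀.symm)).symm⟩
      rw [hWS, hObs, Set.ncard_univ, Nat.card_eq_fintype_card, Fintype.card_prod,
        Fintype.card_fin, Fintype.card_fin]
      simp only [b, if_true, hScard]
      exact le_of_eq (by push_cast; ring)
    · have := card_mul_le_ncard_obs_rowColGraph hM1 hs (M := M) hc₀ (W := W) fun w hw => by
        obtain ⟨i, -, rfl⟩ := mem_image.1 (mem_powerset.1 hW hw)
        rfl
      have : (#W : ℝ) * (ℓ + 2) ≤ (Obs (rowColGraph s ℓ M) W).ncard := by exact_mod_cast this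
      simp only [b, if_neg hWS]
      linarith
  calc (ℓ + 2) * s * (1 - q) + (2 * s ^ 2 - 2 * s) * (1 - q) ^ s
      = ∑ W ∈ S.powerset, b W * (q ^ (#S - #W) * (1 - q) ^ #W) := by
        simp only [b, add_mul, sum_add_distrib, ite_mul, zero_mul, sum_ite_eq', mul_assoc,
          ← mul_sum, mem_powerset_self, if_true, Nat.sub_self, pow_zero, one_mul]
        rw [sum_powerset_card_mul_weight hpq, hScard]
    _ ≤ expolEval (rowColGraph s ℓ M) S q := by
        refine sum_le_sum fun W hW => ?_
        rw [mul_assoc]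
        exact mul_le_mul_of_nonneg_right (hb W hW) (by positivity)

end Expectation

theorem stmt17 (s ℓ : ℕ) (hs : 4 ≤ s)
    (hℓ : s ^ 2 * 2 ^ (s + 1) < ℓ)
    (M : Fin (s - 1) → Fin s → Fin s)
    (hM1 : ∀ j, Function.Involutive (M j))
    (hM3 : ∀ i i' : Fin s, i ≠ i' → ∃! j, M j i = i')
    (A : Finset (Fin s × Fin (ℓ + 2 * s))) (hA : A.card = s)
    -- `A` contains a vertex of the clique column `K` (1-based column `2`, 0-based `1`)
    (hAK : ∃ x ∈ A, x ∈ Finset.univ.image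
        (fun i : Fin s => (i, (⟨1, by omega⟩ : Fin (ℓ + 2 * s))))) :
    (∀ q ∈ Set.Icc (0 : ℝ) 1,
        expolEval (rowColGraph s ℓ M) A q
          ≤ expolEval (rowColGraph s ℓ M)
              (Finset.univ.image
                (fun i : Fin s => (i, (⟨2 * s - 1, by omega⟩ : Fin (ℓ + 2 * s))))) q) ∧
      ∀ q ∈ Set.Ioo (0 : ℝ) 1,
        expolEval (rowColGraph s ℓ M) A q
          < expolEval (rowColGraph s ℓ M)
              (Finset.univ.image
                (fun i : Fin s => (i, (⟨2 * s - 1, by omega⟩ : Fin (ℓ + 2 * s))))) q := by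
  have hℓs : 2 * s ^ 3 < ℓ := by
    have : s < 2 ^ s := Nat.lt_two_pow_self
    nlinarith [pow_succ 2 s]
  have hℓs' : 2 * (s : ℝ) ^ 3 < ℓ := by exact_mod_cast hℓs
  obtain ⟨κ, hκA, hκK⟩ := hAK
  have hκ2 : (κ.2 : ℕ) = 1 := by
    obtain ⟨i, -, rfl⟩ := mem_image.1 hκK
    rfl
  have hgap : ∀ q ∈ Set.Icc (0 : ℝ) 1, expolEval (rowColGraph s ℓ M) A q +
      (1 - q) * q * (ℓ + 2 * s - 2 * s ^ 3) ≤ expolEval (rowColGraph s ℓ M)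
        (univ.image fun i : Fin s => (i, (⟨2 * s - 1, by omega⟩ : Fin (ℓ + 2 * s)))) q := by
    rintro q ⟨hq0, hq1⟩
    have h4 : (4 : ℝ) ≤ s := by exact_mod_cast hs
    have := expectation_gap (n := s) (L := ℓ) (by omega) (by nlinarith) (sub_nonneg.2 hq1) hq0
      (sub_add_cancel 1 q)
    have := expolEval_rowColGraph_le hM1 (fun i i' h => (hM3 i i' h).exists) (by omega) hA hκA
      hκ2 hq0 hq1
    have := le_expolEval_rowColGraph hM1 (M := M) (by omega)
      (c₀ := (⟨2 * s - 1, by omega⟩ : Fin (ℓ + 2 * s))) rfl hq0 hq1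
    linarith
  refine ⟨fun q hq => ?_, fun q hq => ?_⟩
  · nlinarith [hgap q hq, mul_nonneg (sub_nonneg.2 hq.2) hq.1]
  · nlinarith [hgap q (Set.Ioo_subset_Icc_self hq), mul_pos (sub_pos.2 hq.2) hq.1]
end
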